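/- Let $\{\pi_n\}$ be a sequence of monic polynomials over $\mathbb{C}$ with $\deg \pi_n = n$, whose roots $x_{j,n}$ all satisfy $|x_{j,n}| \leq M$ for a constant $M$ independent of $n$. Then for any complex $c \neq 0$ and complex $x$ with $|x| > 1$, $\lim_{n\to\infty} |\pi_n(c x^n)|^{1/n^2} = |x|$. -/

import Mathlib

private lemma prod_ge_aux (lo : ℝ) (hlo : 0 ≤ lo) (s : Multiset ℝ) (h : ∀ x ∈ s, lo ≤ x) :
    lo ^ Multiset.card s ≤ s.prod := by
  induction s using Multiset.induction_on with
  | empty => simp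
  | cons a s ih =>
    simp only [Multiset.card_cons, Multiset.prod_cons, pow_succ]
    have ha : lo ≤ a := h a (Multiset.mem_cons_self a s)
    have hs := ih fun x hx => h x (Multiset.mem_cons_of_mem hx)
    calc lo ^ Multiset.card s * lo ≤ s.prod * lo := by
          exact mul_le_mul_of_nonneg_right hs hlo
      _ = lo * s.prod := mul_comm _ _
      _ ≤ a * s.prod := by
          refine mul_le_mul_of_nonneg_right ha ?_
          exact le_trans (pow_nonneg hlo _) hs

private lemma prod_le_aux (hi : ℝ) (s : Multiset ℝ) (h : ∀ x ∈ s, 0 ≤ x ∧ x ≤ hi) :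
    s.prod ≤ hi ^ Multiset.card s := by
  induction s using Multiset.induction_on with
  | empty => simp
  | cons a s ih =>
    simp only [Multiset.card_cons, Multiset.prod_cons, pow_succ]
    have ha := h a (Multiset.mem_cons_self a s)
    have hs := ih fun x hx => h x (Multiset.mem_cons_of_mem hx)
    have hsnn : 0 ≤ s.prod := Multiset.prod_nonneg fun x hx => (h x (Multiset.mem_cons_of_mem hx)).1
    calc a * s.prod ≤ a * hi ^ Multiset.card s := mul_le_mul_of_nonneg_left hs ha.1
      _ ≤ hi * hi ^ Multiset.card s := by
          refine mul_le_mul_of_nonneg_right ha.2 ?_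
          exact pow_nonneg (le_trans ha.1 ha.2) _
      _ = hi ^ Multiset.card s * hi := mul_comm _ _

private lemma aux_lim (r t M' : ℝ) (hr : 0 < r) (ht : 1 < t) :
    Filter.Tendsto (fun n : ℕ => (r * t ^ n + M') ^ ((1 : ℝ) / n)) Filter.atTop
      (nhds t) := by
  have ht0 : (0 : ℝ) < t := lt_trans one_pos ht
  have h2 : Filter.Tendsto (fun n : ℕ => M' / t ^ n) Filter.atTop (nhds 0) := by
    have h1 : Filter.Tendsto (fun n : ℕ => (1 / t) ^ n) Filter.atTop (nhds 0) :=
      tendsto_pow_atTop_nhds_zero_of_lt_one (by positivity) (by rw [div_lt_one ht0]; exact ht)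
    have := h1.const_mul M'
    simpa [div_pow, one_div, div_eq_mul_inv] using this
  have hb : Filter.Tendsto (fun n : ℕ => r + M' / t ^ n) Filter.atTop (nhds r) := by
    simpa using tendsto_const_nhds.add h2
  have hrec : Filter.Tendsto (fun n : ℕ => (1 : ℝ) / n) Filter.atTop (nhds 0) :=
    tendsto_one_div_atTop_nhds_zero_nat
  have hpow : Filter.Tendsto (fun n : ℕ => (r + M' / t ^ n) ^ ((1 : ℝ) / n))
      Filter.atTop (nhds 1) := by
    have := hb.rpow hrec (Or.inl hr.ne')
    simpa using this
  have hmain : Filter.Tendsto (fun n : ℕ => t * (r + M' / t ^ n) ^ ((1 : ℝ) / n))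
      Filter.atTop (nhds t) := by
    have := (tendsto_const_nhds (x := t)).mul hpow
    simpa using this
  refine hmain.congr' ?_
  have hbpos : ∀ᶠ n : ℕ in Filter.atTop, 0 < r + M' / t ^ n :=
    hb.eventually (eventually_gt_nhds hr)
  filter_upwards [hbpos, Filter.eventually_ge_atTop 1] with n hbn hn
  have hn0 : (n : ℝ) ≠ 0 := Nat.cast_ne_zero.mpr (by omega)
  have htn : (0 : ℝ) < t ^ n := pow_pos ht0 n
  have hfact : r * t ^ n + M' = t ^ n * (r + M' / t ^ n) := by
    field_simp
  rw [hfact, Real.mul_rpow htn.le hbn.le]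
  congr 1
  rw [← Real.rpow_natCast t n, ← Real.rpow_mul ht0.le]
  rw [mul_one_div, div_self hn0]
  exact (Real.rpow_one t).symm

open Polynomial in
theorem stmt_8 (π : ℕ → Polynomial ℂ) (M : ℝ)
    (hmonic : ∀ n, (π n).Monic) (hdeg : ∀ n, (π n).natDegree = n)
    (hroots : ∀ n, ∀ z ∈ (π n).roots, ‖z‖ ≤ M)
    (c x : ℂ) (hc : c ≠ 0) (hx : 1 < ‖x‖) :
    Filter.Tendsto (fun n : ℕ => ‖(π n).eval (c * x ^ n)‖ ^ ((1 : ℝ) / n ^ 2))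
      Filter.atTop (nhds (‖x‖)) := by
  set r := ‖c‖ with hr_def
  set t := ‖x‖ with ht_def
  have hr : 0 < r := norm_pos_iff.mpr hc
  have ht0 : (0 : ℝ) < t := lt_trans one_pos hx
  have hlo := aux_lim r t (-M) hr hx
  have hhi := aux_lim r t M hr hx
  have hMlt : ∀ᶠ n : ℕ in Filter.atTop, M < r * t ^ n := by
    have hpow : Filter.Tendsto (fun n : ℕ => r * t ^ n) Filter.atTop Filter.atTop :=
      (tendsto_pow_atTop_atTop_of_one_lt hx).const_mul_atTop hr
    exact hpow.eventually_gt_atTop M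
  have key : ∀ᶠ n : ℕ in Filter.atTop,
      (r * t ^ n + -M) ^ ((1 : ℝ) / n) ≤
        ‖(π n).eval (c * x ^ n)‖ ^ ((1 : ℝ) / n ^ 2) ∧
      ‖(π n).eval (c * x ^ n)‖ ^ ((1 : ℝ) / n ^ 2) ≤
        (r * t ^ n + M) ^ ((1 : ℝ) / n) := by
    filter_upwards [hMlt, Filter.eventually_ge_atTop 1] with n hM hn
    have hn0 : (n : ℝ) ≠ 0 := Nat.cast_ne_zero.mpr (by omega)
    set w : ℂ := c * x ^ n with hw
    have habsw : ‖w‖ = r * t ^ n := by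
      simp [hw, map_mul, map_pow, hr_def, ht_def]
    have hsplit : Splits (π n) := IsAlgClosed.splits (π n)
    have hcard : Multiset.card (π n).roots = n := by
      rw [(splits_iff_card_roots).mp hsplit, hdeg n]
    have heval : ‖(π n).eval w‖ =
        ((π n).roots.map (fun z => ‖w - z‖)).prod := by
      conv_lhs => rw [hsplit.eq_prod_roots_of_monic (hmonic n)]
      rw [eval_multiset_prod, ← normHom_apply, map_multiset_prod]
      simp [Multiset.map_map, Function.comp]
    set lo : ℝ := r * t ^ n - M with hlo_def
    set hi : ℝ := r * t ^ n + M with hhi_def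
    have hlopos : 0 < lo := sub_pos.mpr hM
    have hbound_lo : ∀ z ∈ (π n).roots, lo ≤ ‖w - z‖ := by
      intro z hz
      have h1 : ‖w‖ - ‖z‖ ≤ ‖w - z‖ := by
        simpa using norm_sub_norm_le w z
      have h2 : lo ≤ ‖w‖ - ‖z‖ := by
        rw [habsw]; have := hroots n z hz; simp [hlo_def]; linarith
      linarith
    have hbound_hi : ∀ z ∈ (π n).roots, ‖w - z‖ ≤ hi := by
      intro z hz
      have h1 : ‖w - z‖ ≤ ‖w‖ + ‖z‖ := by
        simpa using norm_sub_le w z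
      have := hroots n z hz
      rw [habsw] at h1; simp [hhi_def]; linarith
    have hP : lo ^ n ≤ ‖(π n).eval w‖ ∧
        ‖(π n).eval w‖ ≤ hi ^ n := by
      rw [heval]
      constructor
      · have := prod_ge_aux lo hlopos.le ((π n).roots.map (fun z => ‖w - z‖))
          (by intro y hy
              obtain ⟨z, hz, rfl⟩ := Multiset.mem_map.mp hy
              exact hbound_lo z hz)
        simpa [Multiset.card_map, hcard] using this
      · have := prod_le_aux hi ((π n).roots.map (fun z => ‖w - z‖))
          (by intro y hy
              obtain ⟨z, hz, rfl⟩ := Multiset.mem_map.mp hy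
              exact ⟨norm_nonneg _, hbound_hi z hz⟩)
        simpa [Multiset.card_map, hcard] using this
    have hexp : ((n : ℝ)) * ((1 : ℝ) / (n : ℝ) ^ 2) = 1 / n := by
      field_simp
    have hpow_eq : ∀ a : ℝ, 0 ≤ a → (a ^ n) ^ ((1 : ℝ) / (n : ℝ) ^ 2) = a ^ ((1 : ℝ) / n) := by
      intro a ha
      rw [← Real.rpow_natCast a n, ← Real.rpow_mul ha, hexp]
    constructor
    · have h1 : (lo ^ n) ^ ((1 : ℝ) / (n : ℝ) ^ 2) ≤
          ‖(π n).eval w‖ ^ ((1 : ℝ) / (n : ℝ) ^ 2) :=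
        Real.rpow_le_rpow (pow_nonneg hlopos.le n) hP.1 (by positivity)
      rw [hpow_eq lo hlopos.le] at h1
      have : r * t ^ n + -M = lo := by rw [hlo_def]; ring
      rw [this]
      exact h1
    · have hhinn : 0 ≤ hi := by
        have hne : (π n).roots ≠ 0 := by
          intro h0; rw [h0] at hcard; simp at hcard; omega
        obtain ⟨z, hz⟩ := Multiset.exists_mem_of_ne_zero hne
        have hM0 : (0:ℝ) ≤ M := le_trans (norm_nonneg _) (hroots n z hz)
        have hrt : (0:ℝ) ≤ r * t ^ n := by positivity
        simp only [hhi_def]; linarith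
      have h2 : ‖(π n).eval w‖ ^ ((1 : ℝ) / (n : ℝ) ^ 2) ≤
          (hi ^ n) ^ ((1 : ℝ) / (n : ℝ) ^ 2) :=
        Real.rpow_le_rpow (norm_nonneg _) hP.2 (by positivity)
      rw [hpow_eq hi hhinn] at h2
      exact h2
  exact tendsto_of_tendsto_of_tendsto_of_le_of_le' hlo hhi
    (key.mono fun n h => h.1) (key.mono fun n h => h.2)
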